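/- Nonnegativity of the transverse contribution to the discrete energy balance: let N ≥ 1, h = 1/N, and let ρ, u, v : ZMod N × ZMod N → ℝ be periodic grid functions with ρ_{i,j} > 0 for all (i,j). If λ ∈ ℝ satisfies λ ≥ (1/2)·max_{i,j} √(u_{i,j}² + v_{i,j}²), then ∑_{i,j} [ u_{i,j}·∇ᶜ_y(ρuv)_{i,j} − (1/2)u_{i,j}²·∇ᶜ_y(ρv)_{i,j} − λ h ( u_{i,j}·Δ_{h,y}(ρu)_{i,j} − (1/2)u_{i,j}²·Δ_{h,y}ρ_{i,j} ) ] ≥ 0. -/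
import Mathlib


open Finset

noncomputable section

/-- Grid spacing `h = 1/N`. -/
def hh (N : ℕ) : ℝ := 1 / (N : ℝ)

/-- Central difference in `x`: `∇ᶜ_xφ_{i,j} = (φ_{i+1,j} − φ_{i−1,j})/(2h)`. -/
def dCx (N : ℕ) (φ : ZMod N × ZMod N → ℝ) (q : ZMod N × ZMod N) : ℝ :=
  (φ (q.1 + 1, q.2) - φ (q.1 - 1, q.2)) / (2 * hh N)

/-- Central difference in `y`: `∇ᶜ_yφ_{i,j} = (φ_{i,j+1} − φ_{i,j−1})/(2h)`. -/
def dCy (N : ℕ) (φ : ZMod N × ZMod N → ℝ) (q : ZMod N × ZMod N) : ℝ :=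
  (φ (q.1, q.2 + 1) - φ (q.1, q.2 - 1)) / (2 * hh N)

/-- Forward difference in `x`: `∇⁺_xφ_{i,j} = (φ_{i+1,j} − φ_{i,j})/h`. -/
def dPx (N : ℕ) (φ : ZMod N × ZMod N → ℝ) (q : ZMod N × ZMod N) : ℝ :=
  (φ (q.1 + 1, q.2) - φ q) / hh N

/-- Forward difference in `y`: `∇⁺_yφ_{i,j} = (φ_{i,j+1} − φ_{i,j})/h`. -/
def dPy (N : ℕ) (φ : ZMod N × ZMod N → ℝ) (q : ZMod N × ZMod N) : ℝ :=
  (φ (q.1, q.2 + 1) - φ q) / hh N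

/-- Backward difference in `x`: `∇⁻_xφ_{i,j} = (φ_{i,j} − φ_{i−1,j})/h`. -/
def dMx (N : ℕ) (φ : ZMod N × ZMod N → ℝ) (q : ZMod N × ZMod N) : ℝ :=
  (φ q - φ (q.1 - 1, q.2)) / hh N

/-- Backward difference in `y`: `∇⁻_yφ_{i,j} = (φ_{i,j} − φ_{i,j−1})/h`. -/
def dMy (N : ℕ) (φ : ZMod N × ZMod N → ℝ) (q : ZMod N × ZMod N) : ℝ :=
  (φ q - φ (q.1, q.2 - 1)) / hh N

/-- Discrete Laplacian in `x`: `Δ_{h,x}φ_{i,j} = (φ_{i+1,j} − 2φ_{i,j} + φ_{i−1,j})/h²`. -/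
def dLx (N : ℕ) (φ : ZMod N × ZMod N → ℝ) (q : ZMod N × ZMod N) : ℝ :=
  (φ (q.1 + 1, q.2) - 2 * φ q + φ (q.1 - 1, q.2)) / (hh N) ^ 2

/-- Discrete Laplacian in `y`: `Δ_{h,y}φ_{i,j} = (φ_{i,j+1} − 2φ_{i,j} + φ_{i,j−1})/h²`. -/
def dLy (N : ℕ) (φ : ZMod N × ZMod N → ℝ) (q : ZMod N × ZMod N) : ℝ :=
  (φ (q.1, q.2 + 1) - 2 * φ q + φ (q.1, q.2 - 1)) / (hh N) ^ 2

/-- Full discrete Laplacian `Δ_h = Δ_{h,x} + Δ_{h,y}`. -/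
def dL2 (N : ℕ) (φ : ZMod N × ZMod N → ℝ) (q : ZMod N × ZMod N) : ℝ :=
  dLx N φ q + dLy N φ q

/-- The capillarity bracket appearing in the `x`-momentum equation of the 2D scheme. -/
def Kx (N : ℕ) (ρ : ZMod N × ZMod N → ℝ) (q : ZMod N × ZMod N) : ℝ :=
  dMx N (fun r => (ρ r * dL2 N ρ (r.1 + 1, r.2) + ρ (r.1 + 1, r.2) * dL2 N ρ r) / 2) q
    - (1 / 2) * dMx N (fun r => (dPx N ρ r) ^ 2) q
    + (1 / 2) * dMx N (fun r => dMy N ρ (r.1 + 1, r.2) * dMy N ρ r) q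
    - dMy N (fun r => dCx N ρ r * dPy N ρ r) q

/-- The capillarity bracket appearing in the `y`-momentum equation of the 2D scheme
(the symmetric expression with the roles of `x` and `y` interchanged). -/
def Ky (N : ℕ) (ρ : ZMod N × ZMod N → ℝ) (q : ZMod N × ZMod N) : ℝ :=
  dMy N (fun r => (ρ r * dL2 N ρ (r.1, r.2 + 1) + ρ (r.1, r.2 + 1) * dL2 N ρ r) / 2) q
    - (1 / 2) * dMy N (fun r => (dPy N ρ r) ^ 2) q
    + (1 / 2) * dMy N (fun r => dMx N ρ (r.1, r.2 + 1) * dMx N ρ r) q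
    - dMx N (fun r => dCy N ρ r * dPx N ρ r) q

/-- Right-hand side of the 2D semidiscrete density equation: `−dρ_{i,j}/dt = F2rho`. -/
def F2rho (N : ℕ) (lamt : ℝ) (ρ m n : ZMod N × ZMod N → ℝ) (q : ZMod N × ZMod N) : ℝ :=
  dCx N (fun r => ρ r * (m r / ρ r)) q + dCy N (fun r => ρ r * (n r / ρ r)) q
    - lamt * hh N * dL2 N ρ q

/-- Right-hand side of the 2D semidiscrete `x`-momentum equation: `−dm_{i,j}/dt = F2m`. -/
def F2m (N : ℕ) (p : ℝ → ℝ) (μ κ lamt : ℝ) (ρ m n : ZMod N × ZMod N → ℝ)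
    (q : ZMod N × ZMod N) : ℝ :=
  dCx N (fun r => ρ r * (m r / ρ r) ^ 2) q
    + dCy N (fun r => ρ r * (m r / ρ r) * (n r / ρ r)) q
    + dCx N (fun r => p (ρ r)) q
    - μ * dL2 N (fun r => m r / ρ r) q
    - lamt * hh N * dL2 N m q
    - κ * Kx N ρ q

/-- Right-hand side of the 2D semidiscrete `y`-momentum equation: `−dn_{i,j}/dt = F2n`. -/
def F2n (N : ℕ) (p : ℝ → ℝ) (μ κ lamt : ℝ) (ρ m n : ZMod N × ZMod N → ℝ)
    (q : ZMod N × ZMod N) : ℝ :=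
  dCy N (fun r => ρ r * (n r / ρ r) ^ 2) q
    + dCx N (fun r => ρ r * (m r / ρ r) * (n r / ρ r)) q
    + dCy N (fun r => p (ρ r)) q
    - μ * dL2 N (fun r => n r / ρ r) q
    - lamt * hh N * dL2 N n q
    - κ * Ky N ρ q

/-- Summing over the torus is invariant under shifting the second coordinate up. -/
lemma sum_shift_up (N : ℕ) [NeZero N] (f : ZMod N × ZMod N → ℝ) :
    ∑ q : ZMod N × ZMod N, f (q.1, q.2 + 1) = ∑ q : ZMod N × ZMod N, f q := by
  apply Fintype.sum_bijective (fun q : ZMod N × ZMod N => (q.1, q.2 + 1))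
  · exact (Equiv.prodCongr (Equiv.refl _) (Equiv.addRight (1 : ZMod N))).bijective
  · intro q; rfl

/-- Summing over the torus is invariant under shifting the second coordinate down. -/
lemma sum_shift_down (N : ℕ) [NeZero N] (f : ZMod N × ZMod N → ℝ) :
    ∑ q : ZMod N × ZMod N, f (q.1, q.2 - 1) = ∑ q : ZMod N × ZMod N, f q := by
  apply Fintype.sum_bijective (fun q : ZMod N × ZMod N => (q.1, q.2 - 1))
  · exact (Equiv.prodCongr (Equiv.refl _) (Equiv.subRight (1 : ZMod N))).bijective
  · intro q; rfl

/-- Nonnegativity of the transverse contribution `A₃` to the discrete energy balance. -/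
theorem transverse_contribution_nonneg
    (N : ℕ) [NeZero N] (ρ u v : ZMod N × ZMod N → ℝ)
    (hpos : ∀ q : ZMod N × ZMod N, 0 < ρ q)
    (lam : ℝ)
    (hlam : lam ≥ (1 / 2) *
      Finset.univ.sup' ⟨(0, 0), Finset.mem_univ (0, 0)⟩
        (fun q : ZMod N × ZMod N => Real.sqrt ((u q) ^ 2 + (v q) ^ 2))) :
    0 ≤ ∑ q : ZMod N × ZMod N,
      (u q * dCy N (fun r => ρ r * u r * v r) q
        - (1 / 2) * (u q) ^ 2 * dCy N (fun r => ρ r * v r) q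
        - lam * hh N *
            (u q * dLy N (fun r => ρ r * u r) q
              - (1 / 2) * (u q) ^ 2 * dLy N ρ q)) := by
  have hN : (0 : ℝ) < (N : ℝ) := by
    exact_mod_cast Nat.pos_of_ne_zero (NeZero.ne N)
  have hn : (N : ℝ) ≠ 0 := ne_of_gt hN
  set n : ℝ := (N : ℝ) with hn_def
  -- abbreviations for shifted points
  set σ : ZMod N × ZMod N → ZMod N × ZMod N := fun q => (q.1, q.2 + 1) with hσ
  -- |v q| ≤ 2 * lam
  have hv : ∀ q : ZMod N × ZMod N, |v q| ≤ 2 * lam := by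
    intro q
    have h1 : Real.sqrt ((u q) ^ 2 + (v q) ^ 2) ≤
        Finset.univ.sup' ⟨(0, 0), Finset.mem_univ (0, 0)⟩
          (fun q : ZMod N × ZMod N => Real.sqrt ((u q) ^ 2 + (v q) ^ 2)) :=
      Finset.le_sup' (fun q : ZMod N × ZMod N => Real.sqrt ((u q) ^ 2 + (v q) ^ 2)) (Finset.mem_univ q)
    have h2 : |v q| ≤ Real.sqrt ((u q) ^ 2 + (v q) ^ 2) := by
      rw [← Real.sqrt_sq_eq_abs]
      exact Real.sqrt_le_sqrt (by nlinarith [sq_nonneg (u q)])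
    nlinarith
  -- the nonnegative edge energy
  set E : ZMod N × ZMod N → ℝ := fun q =>
    n * (u (σ q) - u q) ^ 2 *
      (lam * (ρ q + ρ (σ q)) / 2 - (ρ (σ q) * v (σ q) - ρ q * v q) / 4) with hE
  set Pp : ZMod N × ZMod N → ℝ := fun q =>
    (n / 2) * u q * (ρ (σ q) * u (σ q) * v (σ q))
      - (n / 4) * (u q) ^ 2 * (ρ (σ q) * v (σ q))
      - lam * n * u q * (ρ (σ q) * u (σ q))
      + (lam * n / 2) * (u q) ^ 2 * ρ (σ q)
      + (lam * n / 2) * ρ q * (u q) ^ 2 with hPp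
  set Sm : ZMod N × ZMod N → ℝ := fun q =>
    - (n / 2) * u (σ q) * (ρ q * u q * v q)
      + (n / 4) * (u (σ q)) ^ 2 * (ρ q * v q)
      - lam * n * u (σ q) * (ρ q * u q)
      + (lam * n / 2) * (u (σ q)) ^ 2 * ρ q
      + (lam * n / 2) * ρ (σ q) * (u (σ q)) ^ 2 with hSm
  set H : ZMod N × ZMod N → ℝ := fun q => (n / 4) * ρ q * v q * (u q) ^ 2 with hH
  -- pointwise decomposition of the summand
  have key : ∀ q : ZMod N × ZMod N,
      (u q * dCy N (fun r => ρ r * u r * v r) q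
        - (1 / 2) * (u q) ^ 2 * dCy N (fun r => ρ r * v r) q
        - lam * hh N *
            (u q * dLy N (fun r => ρ r * u r) q
              - (1 / 2) * (u q) ^ 2 * dLy N ρ q))
      = Pp q + Sm (q.1, q.2 - 1) := by
    intro q
    have hq : ((q.1 : ZMod N), q.2 - 1 + 1) = q := by
      simp
    simp only [hPp, hSm, hσ, dCy, dLy, hh, hq]
    field_simp
    ring
  have key2 : ∀ q : ZMod N × ZMod N, Pp q + Sm q = E q + H (σ q) - H q := by
    intro q
    simp only [hPp, hSm, hE, hH]
    ring
  calc (0 : ℝ) ≤ ∑ q : ZMod N × ZMod N, E q := by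
        apply Finset.sum_nonneg
        intro q _
        have h1 : 0 ≤ n * (u (σ q) - u q) ^ 2 := by positivity
        apply mul_nonneg h1
        have hv1 := hv q
        have hv2 := hv (σ q)
        have hρ1 := hpos q
        have hρ2 := hpos (σ q)
        have hav1 : v q ≤ 2 * lam := le_trans (le_abs_self _) hv1
        have hav1' : -(2 * lam) ≤ v q := neg_le_of_abs_le hv1
        have hav2 : v (σ q) ≤ 2 * lam := le_trans (le_abs_self _) hv2
        have hav2' : -(2 * lam) ≤ v (σ q) := neg_le_of_abs_le hv2
        nlinarith
    _ = ∑ q : ZMod N × ZMod N, (E q + H (σ q) - H q) := by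
        rw [Finset.sum_sub_distrib, Finset.sum_add_distrib]
        have : ∑ q : ZMod N × ZMod N, H (σ q) = ∑ q : ZMod N × ZMod N, H q :=
          sum_shift_up N H
        rw [this]; ring
    _ = ∑ q : ZMod N × ZMod N, (Pp q + Sm q) := by
        exact Finset.sum_congr rfl fun q _ => (key2 q).symm
    _ = ∑ q : ZMod N × ZMod N, (Pp q + Sm (q.1, q.2 - 1)) := by
        have h1 : ∑ q : ZMod N × ZMod N, (Pp q + Sm q)
            = ∑ q : ZMod N × ZMod N, Pp q + ∑ q : ZMod N × ZMod N, Sm q :=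
          Finset.sum_add_distrib
        have h2 : ∑ q : ZMod N × ZMod N, (Pp q + Sm (q.1, q.2 - 1))
            = ∑ q : ZMod N × ZMod N, Pp q + ∑ q : ZMod N × ZMod N, Sm (q.1, q.2 - 1) :=
          Finset.sum_add_distrib
        rw [h1, h2, sum_shift_down N Sm]
    _ = _ := Finset.sum_congr rfl fun q _ => (key q).symm
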